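/- Let Assumptions hold: H ∈ ℝ^{d×d} with ‖H‖_F² ≤ A², w ∈ ℝᵈ with ‖w‖² ≤ G², γ ∈ [0,1), and m₁,…,m_d independent with P(mⱼ = 1/(1-γ)) = 1-γ, P(mⱼ = 0) = γ. Define ĝ = g̃ + H(w∘m - w) for a fixed vector g̃ ∈ ℝᵈ. Then E[ĝ] = g̃ and E[‖ĝ - g̃‖²] ≤ A²G²·γ/(1-γ). -/

import Mathlib

/-!
Coordinatewise, `ĝ i - g̃ i = ∑ j, H i j * w j * (m j - 1)` is a linear combination of the
centred masks, and each mask has mean `1` (this is why it is scaled by `1 / (1 - γ)`) and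
variance `γ / (1 - γ)`. Hence `ĝ` is unbiased, and by independence the second moment of each
coordinate is `∑ j, (H i j * w j) ^ 2 * γ / (1 - γ)`; summing over `i` and using
`(w j) ^ 2 ≤ ‖w‖²` bounds the total by `‖H‖_F² ‖w‖² γ / (1 - γ)`.
-/

open MeasureTheory ProbabilityTheory

section LinearCombination

variable {Ω ι : Type*} [MeasurableSpace Ω] {μ : Measure Ω} [IsProbabilityMeasure μ]
  [Fintype ι] {X : ι → Ω → ℝ}

lemma integral_sum_mul_sub_integral (hX : ∀ i, Integrable (X i) μ) (a : ι → ℝ) :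
    ∫ ω, ∑ i, a i * (X i ω - μ[X i]) ∂μ = 0 := by
  rw [integral_finsetSum (f := fun i ω => a i * (X i ω - μ[X i])) _
    fun i _ => ((hX i).sub (integrable_const _)).const_mul _]
  refine Finset.sum_eq_zero fun i _ => ?_
  rw [integral_const_mul, integral_sub (hX i) (integrable_const _)]
  simp

lemma integral_sq_sum_mul_sub_integral (hX : ∀ i, MemLp (X i) 2 μ)
    (hind : Pairwise fun i j => X i ⟂ᵢ[μ] X j) (a : ι → ℝ) :
    ∫ ω, (∑ i, a i * (X i ω - μ[X i])) ^ 2 ∂μ = ∑ i, a i ^ 2 * Var[X i; μ] := by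
  have hL2 : ∀ i, MemLp (fun ω => a i * X i ω) 2 μ := fun i => (hX i).const_mul (a i)
  have hcenter : ∀ ω, ∑ i, a i * (X i ω - μ[X i])
      = ∑ i, a i * X i ω - μ[fun ω => ∑ i, a i * X i ω] := by
    intro ω
    rw [integral_finsetSum _ fun i _ => hL2 i |>.integrable one_le_two]
    simp only [integral_const_mul, mul_sub, Finset.sum_sub_distrib]
  simp_rw [hcenter]
  rw [← variance_eq_integral (memLp_finsetSum _ fun i _ => hL2 i).aemeasurable]
  have hsum := IndepFun.variance_sum (s := .univ) (fun i _ => hL2 i)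
    fun i _ j _ hij => (hind hij).comp (measurable_const_mul (a i)) (measurable_const_mul (a j))
  simpa only [Finset.sum_fn, variance_const_mul] using hsum

end LinearCombination

lemma sum_sq_mul_le_sum_sq_mul_sum_sq {m n : Type*} [Fintype m] [Fintype n]
    (H : m → n → ℝ) (w : n → ℝ) :
    ∑ i, ∑ j, (H i j * w j) ^ 2 ≤ (∑ i, ∑ j, H i j ^ 2) * ∑ j, w j ^ 2 := by
  simp_rw [Finset.sum_mul, mul_pow]
  gcongr with i _ j _
  exact Finset.single_le_sum (fun k _ => sq_nonneg (w k)) (Finset.mem_univ j)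

lemma eq_indicator_of_forall_eq_or_eq_zero {Ω : Type*} {X : Ω → ℝ} {c : ℝ}
    (hX : ∀ ω, X ω = c ∨ X ω = 0) : X = {ω | X ω = c}.indicator fun _ => c := by
  funext ω
  by_cases hω : X ω = c
  · simp [hω]
  · simp [Set.indicator_of_notMem (show ω ∉ {ω | X ω = c} from hω), (hX ω).resolve_left hω]

namespace InvertedDropoutMask

variable {Ω : Type*} [MeasurableSpace Ω] {μ : Measure Ω} {X : Ω → ℝ} {γ : ℝ}

lemma memLp [IsFiniteMeasure μ] (hXm : Measurable X)
    (hval : ∀ ω, X ω = 1 / (1 - γ) ∨ X ω = 0) (p : ENNReal) : MemLp X p μ := by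
  rw [eq_indicator_of_forall_eq_or_eq_zero hval]
  exact memLp_indicator_const p (hXm (measurableSet_singleton _)) _ (.inr (measure_ne_top _ _))

lemma integral_eq_one (hXm : Measurable X) (hval : ∀ ω, X ω = 1 / (1 - γ) ∨ X ω = 0)
    (hprob : μ {ω | X ω = 1 / (1 - γ)} = ENNReal.ofReal (1 - γ)) (hγ : γ < 1) :
    μ[X] = 1 := by
  have hS : MeasurableSet {ω | X ω = 1 / (1 - γ)} := hXm (measurableSet_singleton _)
  rw [eq_indicator_of_forall_eq_or_eq_zero hval, integral_indicator_const _ hS,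
    measureReal_def, hprob, ENNReal.toReal_ofReal (by linarith), smul_eq_mul]
  field_simp [show 1 - γ ≠ 0 by linarith]

lemma variance_eq [IsProbabilityMeasure μ] (hXm : Measurable X)
    (hval : ∀ ω, X ω = 1 / (1 - γ) ∨ X ω = 0)
    (hprob : μ {ω | X ω = 1 / (1 - γ)} = ENNReal.ofReal (1 - γ)) (hγ : γ < 1) :
    Var[X; μ] = γ / (1 - γ) := by
  have hsq : X ^ 2 = fun ω => 1 / (1 - γ) * X ω := by
    funext ω
    rcases hval ω with h | h <;> simp [h, sq]
  rw [variance_eq_sub (memLp hXm hval 2), hsq, integral_const_mul,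
    integral_eq_one hXm hval hprob hγ]
  field_simp [show 1 - γ ≠ 0 by linarith]
  ring

end InvertedDropoutMask

open InvertedDropoutMask in
theorem stmt13_general {Ω : Type*} [MeasurableSpace Ω] (μ : Measure Ω)
    [IsProbabilityMeasure μ] (d : ℕ)
    (H : Matrix (Fin d) (Fin d) ℝ) (A G : ℝ)
    (hH : ∑ i, ∑ j, (H i j)^2 ≤ A^2)
    (w : Fin d → ℝ) (hw : ∑ j, (w j)^2 ≤ G^2)
    (γ : ℝ) (hγ : γ ∈ Set.Ico (0:ℝ) 1)
    (m : Fin d → Ω → ℝ) (hm : ∀ j, Measurable (m j))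
    (hindep : iIndepFun m μ)
    (hval : ∀ j, ∀ ω, m j ω = 1/(1-γ) ∨ m j ω = 0)
    (h1 : ∀ j, μ {ω | m j ω = 1/(1-γ)} = ENNReal.ofReal (1-γ))
    (gtilde : Fin d → ℝ)
    (ghat : Ω → Fin d → ℝ)
    (hghat : ∀ ω, ghat ω = fun i =>
      gtilde i + H.mulVec (fun j => w j * m j ω - w j) i) :
    (∀ i, ∫ ω, ghat ω i ∂μ = gtilde i) ∧
    ∫ ω, (∑ i, (ghat ω i - gtilde i)^2) ∂μ ≤ A^2 * G^2 * (γ/(1-γ)) := by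
  have hmean j : μ[m j] = 1 := integral_eq_one (hm j) (hval j) (h1 j) hγ.2
  have hL2 j : MemLp (m j) 2 μ := memLp (hm j) (hval j) 2
  have hdev ω i : ghat ω i = gtilde i + ∑ j, H i j * w j * (m j ω - μ[m j]) := by
    simp only [hghat, hmean, Matrix.mulVec, dotProduct, mul_sub, mul_one, mul_assoc]
  have hdevL2 i : MemLp (fun ω => ∑ j, H i j * w j * (m j ω - μ[m j])) 2 μ :=
    memLp_finsetSum _ fun j _ => ((hL2 j).sub (memLp_const _)).const_mul _
  refine ⟨fun i => ?_, ?_⟩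
  · simp_rw [hdev]
    rw [integral_add (integrable_const _) ((hdevL2 i).integrable one_le_two),
      integral_sum_mul_sub_integral fun j => (hL2 j).integrable one_le_two]
    simp
  · simp_rw [hdev, add_sub_cancel_left]
    rw [integral_finsetSum _ fun i _ => (hdevL2 i).integrable_sq]
    simp_rw [integral_sq_sum_mul_sub_integral hL2 fun j k hjk => hindep.indepFun hjk,
      variance_eq (hm _) (hval _) (h1 _) hγ.2, ← Finset.sum_mul]
    gcongr
    · exact div_nonneg hγ.1 (by linarith [hγ.2])
    · exact (sum_sq_mul_le_sum_sq_mul_sum_sq H w).trans (by gcongr)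

theorem stmt13 {Ω : Type*} [MeasurableSpace Ω] (μ : Measure Ω)
    [IsProbabilityMeasure μ] (d : ℕ)
    (H : Matrix (Fin d) (Fin d) ℝ) (A G : ℝ) (hA : 0 ≤ A) (hG : 0 ≤ G)
    (hH : ∑ i, ∑ j, (H i j)^2 ≤ A^2)
    (w : Fin d → ℝ) (hw : ∑ j, (w j)^2 ≤ G^2)
    (γ : ℝ) (hγ : γ ∈ Set.Ico (0:ℝ) 1)
    (m : Fin d → Ω → ℝ) (hm : ∀ j, Measurable (m j))
    (hindep : iIndepFun m μ)
    (hval : ∀ j, ∀ ω, m j ω = 1/(1-γ) ∨ m j ω = 0)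
    (h1 : ∀ j, μ {ω | m j ω = 1/(1-γ)} = ENNReal.ofReal (1-γ))
    (h0 : ∀ j, μ {ω | m j ω = 0} = ENNReal.ofReal γ)
    (gtilde : Fin d → ℝ)
    (ghat : Ω → Fin d → ℝ)
    (hghat : ∀ ω, ghat ω = fun i =>
      gtilde i + H.mulVec (fun j => w j * m j ω - w j) i) :
    (∀ i, ∫ ω, ghat ω i ∂μ = gtilde i) ∧
    ∫ ω, (∑ i, (ghat ω i - gtilde i)^2) ∂μ ≤ A^2 * G^2 * (γ/(1-γ)) :=
  stmt13_general μ d H A G hH w hw γ hγ m hm hindep hval h1 gtilde ghat hghat
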